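/- arXiv:1910.06843 — 2 statements merged into one kernel-verified Lean document; each statement's English description precedes it below -/
import Mathlib

section
/- There is a unique Littlewood-Richardson skew tableau of shape (μ+ν)/μ and content ν, where (μ+ν)_k = μ_k + ν_k. -/
/-- A partition: a weakly decreasing sequence of natural numbers with finitely many nonzero
terms, recorded as a function `ℕ → ℕ` giving the (0-indexed) parts.  Partitions differing
only in trailing zeros are identified. -/
structure LRPartition where
  f : ℕ → ℕ
  antitone : Antitone f
  eventually_zero : ∃ N, ∀ n, N ≤ n → f n = 0

namespace LRPartition

/-- The empty partition `∅`. -/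
def empty : LRPartition := ⟨fun _ => 0, fun _ _ _ => le_rfl, 0, fun _ _ => rfl⟩

/-- Entrywise sum `μ + ν` of partitions: `(μ + ν)_k = μ_k + ν_k`. -/
noncomputable instance : Add LRPartition :=
  ⟨fun p q =>
    ⟨fun i => p.f i + q.f i, fun _ _ h => Nat.add_le_add (p.antitone h) (q.antitone h), by
      obtain ⟨N, hN⟩ := p.eventually_zero
      obtain ⟨M, hM⟩ := q.eventually_zero
      refine ⟨max N M, fun n hn => ?_⟩
      show p.f n + q.f n = 0
      rw [hN n (le_trans (le_max_left _ _) hn), hM n (le_trans (le_max_right _ _) hn)]⟩⟩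

/-- The size `|λ|` of a partition: the sum of its parts. -/
noncomputable def size (p : LRPartition) : ℕ := ∑' i, p.f i

/-- The partial sum `|λ|_k = λ_1 + ⋯ + λ_k`. -/
def psum (p : LRPartition) (k : ℕ) : ℕ := ∑ i ∈ Finset.range k, p.f i

/-- The length `ℓ(λ)`: the number of nonzero parts. -/
noncomputable def len (p : LRPartition) : ℕ := sInf {N | p.f N = 0}

lemma support_finite (p : LRPartition) (j : ℕ) : {i | j + 1 ≤ p.f i}.Finite := by
  obtain ⟨N, hN⟩ := p.eventually_zero
  refine (Set.finite_Iio N).subset fun i hi => ?_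
  simp only [Set.mem_setOf_eq] at hi
  simp only [Set.mem_Iio]
  by_contra h
  push_neg at h
  rw [hN i h] at hi
  omega

/-- The conjugate partition `λ'`: `λ'_j = #{i : λ_i ≥ j}` (transpose of the Young diagram). -/
noncomputable def conj (p : LRPartition) : LRPartition where
  f := fun j => {i | j + 1 ≤ p.f i}.ncard
  antitone := by
    intro j j' h
    exact Set.ncard_le_ncard (fun i hi => le_trans (by omega : j + 1 ≤ j' + 1) hi)
      (p.support_finite j)
  eventually_zero := by
    refine ⟨p.f 0, fun n hn => ?_⟩
    show {i | n + 1 ≤ p.f i}.ncard = 0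
    have : {i | n + 1 ≤ p.f i} = ∅ := by
      ext i
      simp only [Set.mem_setOf_eq, Set.mem_empty_iff_false, iff_false]
      have := p.antitone (Nat.zero_le i)
      omega
    rw [this, Set.ncard_empty]

/-- The rectangular partition `□_{a,b}` with `a` parts each equal to `b`. -/
def rect (a b : ℕ) : LRPartition where
  f := fun i => if i < a then b else 0
  antitone := by
    intro i j hij
    dsimp only
    split_ifs <;> omega
  eventually_zero := ⟨a, fun n hn => by simp [Nat.not_lt_of_le hn]⟩

/-- The concatenation `(□_{a,d} + μ, α)`: the first `a` parts are `d + μ_k`, followed by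
the parts of `α` (requiring `α_1 ≤ d`). -/
def rectConcat (a d : ℕ) (μ α : LRPartition) (hα : α.f 0 ≤ d) : LRPartition where
  f := fun i => if i < a then d + μ.f i else α.f (i - a)
  antitone := by
    intro x y hxy
    dsimp only
    split_ifs with hy hx hx
    · exact Nat.add_le_add_left (μ.antitone hxy) d
    · exact absurd hy (by omega)
    · exact le_trans (le_trans (α.antitone (Nat.zero_le _)) hα) (Nat.le_add_right d _)
    · exact α.antitone (by omega)
  eventually_zero := by
    obtain ⟨N, hN⟩ := α.eventually_zero
    refine ⟨a + N, fun n hn => ?_⟩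
    show (if n < a then d + μ.f n else α.f (n - a)) = 0
    rw [if_neg (by omega)]
    exact hN _ (by omega)

/-- The partition `□_{a,d} + μ`, adding `d` to each of the first `a` parts of `μ`
(intended for `ℓ(μ) ≤ a`). -/
def rectAdd (a d : ℕ) (μ : LRPartition) : LRPartition :=
  rectConcat a d μ empty (Nat.zero_le d)

/-- The complement `λ^∨` of `λ` inside the rectangle `□_{a,b}`:
`(λ^∨)_i = b - λ_{a+1-i}` (intended for `λ ⊆ □_{a,b}`). -/
def compl (a b : ℕ) (p : LRPartition) : LRPartition where
  f := fun i => if i < a then b - p.f (a - 1 - i) else 0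
  antitone := by
    intro x y hxy
    dsimp only
    split_ifs with hy hx hx
    · exact Nat.sub_le_sub_left (p.antitone (by omega)) b
    · exact absurd hy (by omega)
    · exact Nat.zero_le _
    · exact le_rfl
  eventually_zero := ⟨a, fun n hn => by simp [Nat.not_lt_of_le hn]⟩

/-- The list of (nonzero) parts of a partition. -/
noncomputable def toList (p : LRPartition) : List ℕ := (List.range p.len).map p.f

/-- The partition `(μ, ν)`: the decreasing rearrangement of the concatenation of the
parts of `μ` and of `ν`. -/
noncomputable def sortedConcat (p q : LRPartition) : LRPartition where
  f := fun i => ((p.toList ++ q.toList).mergeSort (fun x y => decide (y ≤ x))).getD i 0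
  antitone := by
    intro x y hxy
    dsimp only
    set L := (p.toList ++ q.toList).mergeSort (fun x y => decide (y ≤ x)) with hL
    have hs : List.Pairwise (fun a b : ℕ => b ≤ a) L := by
      have := List.pairwise_mergeSort (le := fun x y : ℕ => decide (y ≤ x))
        (fun a b c hab hbc => by simp at hab hbc ⊢; omega)
        (fun a b => by simp; omega) (p.toList ++ q.toList)
      simpa using this
    by_cases hy : y < L.length
    · have hx : x < L.length := lt_of_le_of_lt hxy hy
      rcases eq_or_lt_of_le hxy with h | h
      · subst h; exact le_rfl
      · have := (List.pairwise_iff_get.mp hs) ⟨x, hx⟩ ⟨y, hy⟩ h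
        rw [List.getD_eq_getElem L 0 hy, List.getD_eq_getElem L 0 hx]
        simpa [List.get] using this
    · rw [List.getD_eq_default L 0 (by omega)]
      exact Nat.zero_le _
  eventually_zero :=
    ⟨((p.toList ++ q.toList).mergeSort (fun x y => decide (y ≤ x))).length,
      fun n hn => List.getD_eq_default _ 0 hn⟩


lemma compl_f_le (a b : ℕ) (p : LRPartition) (i : ℕ) : (compl a b p).f i ≤ b := by
  show (if i < a then b - p.f (a - 1 - i) else 0) ≤ b
  split_ifs <;> omega

lemma rect_f_le (a b i : ℕ) : (rect a b).f i ≤ b := by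
  show (if i < a then b else 0) ≤ b
  split_ifs <;> omega

end LRPartition

open LRPartition

/-- The cells of the skew diagram `λ/ν`: row `i`, columns `ν_i ≤ j < λ_i` (0-indexed). -/
def skewCells (lam nu : LRPartition) : Set (ℕ × ℕ) :=
  {p | nu.f p.1 ≤ p.2 ∧ p.2 < lam.f p.1}

/-- A Littlewood–Richardson skew tableau of shape `λ/ν` and content `μ`: a filling of the
skew diagram `λ/ν` by positive integers, weakly increasing along rows and strictly
increasing down columns, in which `k` occurs `μ_k` times, and whose right-to-left,
top-to-bottom reading word has the lattice property (every initial segment of the word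
contains at least as many `k`'s as `(k+1)`'s). -/
structure LRTableau (lam nu mu : LRPartition) where
  entry : ℕ × ℕ → ℕ
  zero_outside : ∀ p, p ∉ skewCells lam nu → entry p = 0
  pos : ∀ p ∈ skewCells lam nu, 0 < entry p
  row_weak : ∀ i j j', (i, j) ∈ skewCells lam nu → (i, j') ∈ skewCells lam nu →
    j ≤ j' → entry (i, j) ≤ entry (i, j')
  col_strict : ∀ i i' j, (i, j) ∈ skewCells lam nu → (i', j) ∈ skewCells lam nu →
    i < i' → entry (i, j) < entry (i', j)
  content : ∀ k, {p ∈ skewCells lam nu | entry p = k + 1}.ncard = mu.f k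
  lattice : ∀ i j k,
    {p ∈ skewCells lam nu | entry p = k + 2 ∧ (p.1 < i ∨ (p.1 = i ∧ j ≤ p.2))}.ncard ≤
    {p ∈ skewCells lam nu | entry p = k + 1 ∧ (p.1 < i ∨ (p.1 = i ∧ j ≤ p.2))}.ncard

/-- The Littlewood–Richardson coefficient `c^λ_{μ,ν}`: the number of Littlewood–Richardson
skew tableaux of shape `λ/ν` and content `μ`; equivalently, the coefficient of the Schur
function `S_λ` in the product `S_μ · S_ν`. -/
noncomputable def lrCoeff (lam mu nu : LRPartition) : ℕ := Nat.card (LRTableau lam nu mu)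

open Classical in
/-- The coefficient of the Schur function `S_λ` in a product `S_{μ^1} ⋯ S_{μ^r}` of Schur
functions, via iterated Littlewood–Richardson expansion:
`c^λ_{μ̲} = Σ_κ c^κ_{(μ^2,…,μ^r)} · c^λ_{μ^1,κ}`. -/
noncomputable def multiCoeff : List LRPartition → LRPartition → ℕ
  | [], lam => if lam = LRPartition.empty then 1 else 0
  | mu :: rest, lam => ∑' kappa : LRPartition, multiCoeff rest kappa * lrCoeff lam mu kappa




section Aux
open Classical

lemma mem_cells_iff (mu nu : LRPartition) (i j : ℕ) :
    (i, j) ∈ skewCells (mu + nu) mu ↔ mu.f i ≤ j ∧ j < mu.f i + nu.f i := Iff.rfl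

lemma cells_finite (mu nu : LRPartition) : (skewCells (mu + nu) mu).Finite := by
  obtain ⟨N, hN⟩ := nu.eventually_zero
  have : skewCells (mu + nu) mu ⊆ Set.Iio N ×ˢ Set.Iio (mu.f 0 + nu.f 0) := by
    rintro ⟨i, j⟩ ⟨h1, h2⟩
    have h1' : mu.f i ≤ j := h1
    have h2' : j < mu.f i + nu.f i := h2
    simp only [Set.mem_prod, Set.mem_Iio]
    constructor
    · by_contra h; push_neg at h
      rw [hN i h] at h2'; omega
    · have := mu.antitone (Nat.zero_le i)
      have := nu.antitone (Nat.zero_le i)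
      omega
  exact (((Set.finite_Iio N).prod (Set.finite_Iio _))).subset this

def rowSet (mu nu : LRPartition) (t : ℕ) : Set (ℕ × ℕ) :=
  {p | p.1 = t ∧ mu.f t ≤ p.2 ∧ p.2 < mu.f t + nu.f t}

lemma rowSet_eq_image (mu nu : LRPartition) (t : ℕ) :
    rowSet mu nu t = Prod.mk t '' Set.Ico (mu.f t) (mu.f t + nu.f t) := by
  ext ⟨i, j⟩
  simp only [rowSet, Set.mem_setOf_eq, Set.mem_image, Set.mem_Ico, Prod.mk.injEq]
  constructor
  · rintro ⟨rfl, h1, h2⟩; exact ⟨j, ⟨h1, h2⟩, rfl, rfl⟩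
  · rintro ⟨x, ⟨h1, h2⟩, rfl, rfl⟩; exact ⟨rfl, h1, h2⟩

lemma rowSet_finite (mu nu : LRPartition) (t : ℕ) : (rowSet mu nu t).Finite := by
  rw [rowSet_eq_image]; exact (Set.finite_Ico _ _).image _

lemma rowSet_ncard (mu nu : LRPartition) (t : ℕ) : (rowSet mu nu t).ncard = nu.f t := by
  rw [rowSet_eq_image, Set.ncard_image_of_injective _ (fun x y h => (Prod.ext_iff.mp h).2)]
  rw [Set.ncard_eq_toFinset_card']; simp

open Classical in
noncomputable def canonEntry (mu nu : LRPartition) (p : ℕ × ℕ) : ℕ :=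
  if p ∈ skewCells (mu + nu) mu then p.1 + 1 else 0

lemma canonEntry_mem {mu nu : LRPartition} {p : ℕ × ℕ} (hp : p ∈ skewCells (mu + nu) mu) :
    canonEntry mu nu p = p.1 + 1 := by rw [canonEntry, if_pos hp]

lemma canonEntry_notmem {mu nu : LRPartition} {p : ℕ × ℕ} (hp : p ∉ skewCells (mu + nu) mu) :
    canonEntry mu nu p = 0 := by rw [canonEntry, if_neg hp]

lemma rowSet_subset_cells (mu nu : LRPartition) (t : ℕ) :
    rowSet mu nu t ⊆ skewCells (mu + nu) mu := by
  rintro ⟨i, j⟩ ⟨rfl, h1, h2⟩; exact ⟨h1, h2⟩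

/-- Every LR tableau of shape (μ+ν)/μ and content ν has entry i+1 in row i. -/
lemma entry_eq_row (mu nu : LRPartition) (T : LRTableau (mu + nu) mu nu) :
    ∀ i j, (i, j) ∈ skewCells (mu + nu) mu → T.entry (i, j) = i + 1 := by
  intro i
  induction i using Nat.strong_induction_on with
  | _ i IH =>
  intro j hij
  have hpos : 0 < T.entry (i, j) := T.pos _ hij
  -- Upper bound
  have hub : T.entry (i, j) ≤ i + 1 := by
    by_contra h
    push_neg at h
    set m := T.entry (i, j) with hm
    have hm2 : i + 2 ≤ m := h
    have hl := T.lattice i j (m - 2)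
    have h1 : {p ∈ skewCells (mu + nu) mu |
        T.entry p = (m - 2) + 1 ∧ (p.1 < i ∨ (p.1 = i ∧ j ≤ p.2))} = ∅ := by
      ext ⟨a, b⟩
      simp only [Set.mem_setOf_eq, Set.mem_empty_iff_false, iff_false, not_and]
      rintro hc he (hlt | ⟨rfl, hj⟩)
      · have := IH a hlt b hc
        omega
      · have := T.row_weak a j b hij hc hj
        omega
    have h2 : (i, j) ∈ {p ∈ skewCells (mu + nu) mu |
        T.entry p = (m - 2) + 2 ∧ (p.1 < i ∨ (p.1 = i ∧ j ≤ p.2))} := by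
      exact ⟨hij, by omega, Or.inr ⟨rfl, le_rfl⟩⟩
    rw [h1, Set.ncard_empty] at hl
    have hfin : {p ∈ skewCells (mu + nu) mu |
        T.entry p = (m - 2) + 2 ∧ (p.1 < i ∨ (p.1 = i ∧ j ≤ p.2))}.Finite :=
      (cells_finite mu nu).subset (fun p hp => hp.1)
    have := Set.ncard_pos hfin |>.mpr ⟨_, h2⟩
    omega
  -- Lower bound
  by_contra hne
  obtain ⟨t, ht, hlt⟩ : ∃ t, T.entry (i, j) = t + 1 ∧ t < i := by
    refine ⟨T.entry (i, j) - 1, by omega, by omega⟩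
  have hSfin : {p ∈ skewCells (mu + nu) mu | T.entry p = t + 1}.Finite :=
    (cells_finite mu nu).subset (fun p hp => hp.1)
  have hsub : insert (i, j) (rowSet mu nu t) ⊆
      {p ∈ skewCells (mu + nu) mu | T.entry p = t + 1} := by
    rintro ⟨a, b⟩ hab
    rcases hab with hab | hab
    · rw [hab] at *
      exact ⟨hij, ht⟩
    · obtain ⟨rfl, h1, h2⟩ := hab
      exact ⟨⟨h1, h2⟩, IH a hlt b ⟨h1, h2⟩⟩
  have hnotmem : (i, j) ∉ rowSet mu nu t := by
    rintro ⟨h, -⟩; omega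
  have hcard := Set.ncard_le_ncard hsub hSfin
  rw [Set.ncard_insert_of_notMem hnotmem (rowSet_finite mu nu t),
    rowSet_ncard, T.content t] at hcard
  omega

end Aux

/-- There is a unique Littlewood–Richardson skew tableau of shape `(μ+ν)/μ` and content `ν`. -/
theorem unique_LRTableau_sum_shape (mu nu : LRPartition) :
    Nonempty (LRTableau (mu + nu) mu nu) ∧
    ∀ T T' : LRTableau (mu + nu) mu nu, T = T' := by
  classical
  constructor
  · refine ⟨⟨canonEntry mu nu,
      fun p hp => canonEntry_notmem hp,
      fun p hp => by rw [canonEntry_mem hp]; omega,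
      ?_, ?_, ?_, ?_⟩⟩
    · intro i j j' h1 h2 _
      rw [canonEntry_mem h1, canonEntry_mem h2]
    · intro i i' j h1 h2 hii
      rw [canonEntry_mem h1, canonEntry_mem h2]; omega
    · intro k
      have : {p ∈ skewCells (mu + nu) mu |
          canonEntry mu nu p = k + 1} = rowSet mu nu k := by
        ext ⟨a, b⟩
        simp only [Set.mem_setOf_eq, rowSet]
        constructor
        · rintro ⟨hc, he⟩
          rw [canonEntry_mem hc] at he
          have ha : a = k := by omega
          subst ha
          exact ⟨rfl, hc.1, hc.2⟩
        · rintro ⟨rfl, h1, h2⟩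
          have hc : (a, b) ∈ skewCells (mu + nu) mu := ⟨h1, h2⟩
          exact ⟨hc, by rw [canonEntry_mem hc]⟩
      rw [this, rowSet_ncard]
    · intro i j k
      by_cases hik : i ≤ k
      · have : {p ∈ skewCells (mu + nu) mu |
            canonEntry mu nu p = k + 2 ∧
            (p.1 < i ∨ (p.1 = i ∧ j ≤ p.2))} = ∅ := by
          ext ⟨a, b⟩
          simp only [Set.mem_setOf_eq, Set.mem_empty_iff_false, iff_false, not_and]
          rintro hc he
          rw [canonEntry_mem hc] at he
          rintro (h | ⟨rfl, -⟩) <;> omega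
        rw [this, Set.ncard_empty]
        exact Nat.zero_le _
      · push_neg at hik
        have hsub2 : {p ∈ skewCells (mu + nu) mu |
            canonEntry mu nu p = k + 2 ∧
            (p.1 < i ∨ (p.1 = i ∧ j ≤ p.2))} ⊆ rowSet mu nu (k + 1) := by
          rintro ⟨a, b⟩ ⟨hc, he, -⟩
          rw [canonEntry_mem hc] at he
          have : a = k + 1 := by omega
          subst this
          exact ⟨rfl, hc.1, hc.2⟩
        have hsub1 : rowSet mu nu k ⊆ {p ∈ skewCells (mu + nu) mu |
            canonEntry mu nu p = k + 1 ∧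
            (p.1 < i ∨ (p.1 = i ∧ j ≤ p.2))} := by
          rintro ⟨a, b⟩ ⟨rfl, h1, h2⟩
          have hc : (a, b) ∈ skewCells (mu + nu) mu := ⟨h1, h2⟩
          exact ⟨hc, by rw [canonEntry_mem hc], Or.inl hik⟩
        calc {p ∈ skewCells (mu + nu) mu |
            canonEntry mu nu p = k + 2 ∧
            (p.1 < i ∨ (p.1 = i ∧ j ≤ p.2))}.ncard
            ≤ (rowSet mu nu (k + 1)).ncard :=
              Set.ncard_le_ncard hsub2 (rowSet_finite mu nu (k + 1))
          _ = nu.f (k + 1) := rowSet_ncard mu nu (k + 1)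
          _ ≤ nu.f k := nu.antitone (Nat.le_succ k)
          _ = (rowSet mu nu k).ncard := (rowSet_ncard mu nu k).symm
          _ ≤ _ := Set.ncard_le_ncard hsub1
              ((cells_finite mu nu).subset (fun p hp => hp.1))
  · intro T T'
    have hent : T.entry = T'.entry := by
      funext p
      by_cases hp : p ∈ skewCells (mu + nu) mu
      · obtain ⟨a, b⟩ := p
        rw [entry_eq_row mu nu T a b hp, entry_eq_row mu nu T' a b hp]
      · rw [T.zero_outside p hp, T'.zero_outside p hp]
    obtain ⟨e, _, _, _, _, _, _⟩ := T
    obtain ⟨e', _, _, _, _, _, _⟩ := T'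
    simp only at hent
    subst hent
    rfl
end

section
/- Let l = m + n with l ≥ ℓ(λ), m ≥ ℓ(μ), n ≥ ℓ(ν). Then the number of Littlewood-Richardson skew tableaux of shape λ/ν with content μ equals the number of Littlewood-Richardson skew tableaux of shape (□_{l,d}+λ)/(□_{n,d}+ν) with content □_{m,d}+μ, for any d ≥ 0; equivalently c^λ_{μ,ν} = c^{□_{l,d}+λ}_{□_{m,d}+μ, □_{n,d}+ν}. -/
open LRPartition

namespace FrozenAux

open LRPartition

lemma f_eq_zero (p : LRPartition) {a i : ℕ} (h : p.len ≤ a) (hi : a ≤ i) : p.f i = 0 := by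
  have hne : {N | p.f N = 0}.Nonempty := by
    obtain ⟨N, hN⟩ := p.eventually_zero
    exact ⟨N, hN N le_rfl⟩
  have h0 : p.f p.len = 0 := Nat.sInf_mem hne
  have h1 := p.antitone (le_trans h hi)
  omega

lemma rectAdd_f (a b : ℕ) (μ : LRPartition) (i : ℕ) :
    (rectAdd a b μ).f i = if i < a then b + μ.f i else 0 := rfl

lemma cells_finite (lam nu : LRPartition) : (skewCells lam nu).Finite := by
  obtain ⟨N, hN⟩ := lam.eventually_zero
  apply Set.Finite.subset ((Set.finite_Iio N).prod (Set.finite_Iio (lam.f 0)))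
  rintro ⟨i, j⟩ hm
  simp only [skewCells, Set.mem_setOf_eq] at hm
  obtain ⟨h1, h2⟩ := hm
  have h3 := lam.antitone (Nat.zero_le i)
  simp only [Set.mem_prod, Set.mem_Iio]
  constructor
  · by_contra h
    push_neg at h
    rw [hN i h] at h2
    omega
  · omega

lemma cell_row_lt {l : ℕ} {lam nu : LRPartition} (hll : lam.len ≤ l) {i j : ℕ}
    (h : (i, j) ∈ skewCells lam nu) : i < l := by
  simp only [skewCells, Set.mem_setOf_eq] at h
  obtain ⟨h1, h2⟩ := h
  by_contra hc
  push_neg at hc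
  rw [f_eq_zero lam hll hc] at h2
  omega

lemma ncard_lt_set (d : ℕ) : {c : ℕ | c < d}.ncard = d := by
  rw [show {c : ℕ | c < d} = ↑(Finset.range d) by ext c; simp, Set.ncard_coe_finset,
    Finset.card_range]

section Main

variable {l m n d : ℕ} {lam mu nu : LRPartition}

lemma mem_cells' (hl : l = m + n) (hll : lam.len ≤ l) (hln : nu.len ≤ n) (i j : ℕ) :
    ((i, j) ∈ skewCells (rectAdd l d lam) (rectAdd n d nu)) ↔
      ((j < d ∧ n ≤ i ∧ i < l) ∨ (d ≤ j ∧ i < l ∧ (i, j - d) ∈ skewCells lam nu)) := by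
  have hlamz : ∀ i', l ≤ i' → lam.f i' = 0 := fun i' h => f_eq_zero lam hll h
  simp only [skewCells, Set.mem_setOf_eq, rectAdd_f]
  rcases lt_or_ge i n with hi | hi
  · rw [if_pos hi, if_pos (by omega : i < l)]
    constructor
    · rintro ⟨h1, h2⟩
      exact Or.inr ⟨by omega, by omega, by omega, by omega⟩
    · rintro (⟨_, h2, _⟩ | ⟨h1, _, h2, h3⟩) <;> omega
  · rw [if_neg (by omega)]
    rcases lt_or_ge i l with hil | hil
    · rw [if_pos hil]
      have hnuz : nu.f i = 0 := f_eq_zero nu hln hi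
      constructor
      · rintro ⟨-, h2⟩
        rcases lt_or_ge j d with hj | hj
        · exact Or.inl ⟨hj, hi, hil⟩
        · exact Or.inr ⟨hj, hil, by omega, by omega⟩
      · rintro (⟨hj, _, _⟩ | ⟨hj, _, h2, h3⟩) <;> omega
    · rw [if_neg (by omega)]
      constructor
      · rintro ⟨-, h2⟩
        have := hlamz i hil
        omega
      · rintro (h | h) <;> omega

lemma rect_mem (hl : l = m + n) (hll : lam.len ≤ l) (hln : nu.len ≤ n) {r c : ℕ}
    (h1 : n ≤ r) (h2 : r < l) (h3 : c < d) :
    (r, c) ∈ skewCells (rectAdd l d lam) (rectAdd n d nu) :=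
  (mem_cells' hl hll hln r c).mpr (Or.inl ⟨h3, h1, h2⟩)

lemma entry_le (hlm : mu.len ≤ m)
    (T' : LRTableau (rectAdd l d lam) (rectAdd n d nu) (rectAdd m d mu))
    {p : ℕ × ℕ} (hp : p ∈ skewCells (rectAdd l d lam) (rectAdd n d nu)) :
    T'.entry p ≤ m := by
  by_contra h
  push_neg at h
  have hv := T'.pos p hp
  have hc := T'.content (T'.entry p - 1)
  rw [rectAdd_f, if_neg (by omega)] at hc
  have hfin : {q ∈ skewCells (rectAdd l d lam) (rectAdd n d nu) |
      T'.entry q = (T'.entry p - 1) + 1}.Finite :=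
    (cells_finite _ _).subset (fun q hq => hq.1)
  have hempty := (Set.ncard_eq_zero hfin).mp hc
  have hpmem : p ∈ {q ∈ skewCells (rectAdd l d lam) (rectAdd n d nu) |
      T'.entry q = (T'.entry p - 1) + 1} := ⟨hp, by omega⟩
  rw [hempty] at hpmem
  exact hpmem

lemma chain (hl : l = m + n) (hll : lam.len ≤ l) (hln : nu.len ≤ n)
    (T' : LRTableau (rectAdd l d lam) (rectAdd n d nu) (rectAdd m d mu)) :
    ∀ k r c, n ≤ r → r + k < l → c < d → T'.entry (r, c) + k ≤ T'.entry (r + k, c) := by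
  intro k
  induction k with
  | zero => intro r c _ _ _; simp
  | succ k ih =>
    intro r c h1 h2 h3
    have hmem1 := rect_mem hl hll hln (show n ≤ r + k by omega) (by omega) h3
    have hmem2 := rect_mem hl hll hln (show n ≤ r + k + 1 by omega) (by omega) h3
    have hs := T'.col_strict (r + k) (r + k + 1) c hmem1 hmem2 (by omega)
    have hi := ih r c h1 (by omega) h3
    rw [show r + (k + 1) = r + k + 1 from rfl]
    omega

lemma frozen (hl : l = m + n) (hll : lam.len ≤ l) (hlm : mu.len ≤ m) (hln : nu.len ≤ n)
    (T' : LRTableau (rectAdd l d lam) (rectAdd n d nu) (rectAdd m d mu))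
    {r c : ℕ} (h1 : n ≤ r) (h2 : r < l) (h3 : c < d) :
    T'.entry (r, c) = r - n + 1 := by
  have hpos := T'.pos (n, c) (rect_mem hl hll hln le_rfl (by omega) h3)
  have hlow := chain hl hll hln T' (r - n) n c le_rfl (by omega) h3
  rw [show n + (r - n) = r by omega] at hlow
  have hhigh := chain hl hll hln T' (l - 1 - r) r c h1 (by omega) h3
  rw [show r + (l - 1 - r) = l - 1 by omega] at hhigh
  have hle := entry_le hlm T' (rect_mem hl hll hln (show n ≤ l - 1 by omega) (by omega) h3)
  omega

lemma raw_chain (hln : nu.len ≤ n) (e : ℕ × ℕ → ℕ)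
    (hpos : ∀ p ∈ skewCells lam nu, 0 < e p)
    (hcol : ∀ i i' j, (i, j) ∈ skewCells lam nu → (i', j) ∈ skewCells lam nu → i < i' →
      e (i, j) < e (i', j)) :
    ∀ k r c, n ≤ r → (r + k, c) ∈ skewCells lam nu → e (r, c) + k ≤ e (r + k, c) := by
  have hup : ∀ r k c, n ≤ r → (r + k, c) ∈ skewCells lam nu → (r, c) ∈ skewCells lam nu := by
    intro r k c h1 h2
    simp only [skewCells, Set.mem_setOf_eq] at h2 ⊢
    obtain ⟨ha, hb⟩ := h2
    have hnuz : nu.f r = 0 := f_eq_zero nu hln h1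
    have hlamz := lam.antitone (Nat.le_add_right r k)
    exact ⟨by omega, by omega⟩
  intro k
  induction k with
  | zero => intro r c _ _; simp
  | succ k ih =>
    intro r c h1 h2
    rw [show r + (k + 1) = r + k + 1 from rfl] at *
    have hmem1 : (r + k, c) ∈ skewCells lam nu := hup (r + k) 1 c (by omega) h2
    have hs := hcol (r + k) (r + k + 1) c hmem1 h2 (by omega)
    have hi := ih r c h1 hmem1
    omega

lemma raw_row_le (hln : nu.len ≤ n) (e : ℕ × ℕ → ℕ)
    (hpos : ∀ p ∈ skewCells lam nu, 0 < e p)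
    (hcol : ∀ i i' j, (i, j) ∈ skewCells lam nu → (i', j) ∈ skewCells lam nu → i < i' →
      e (i, j) < e (i', j))
    {r c k : ℕ} (hmem : (r, c) ∈ skewCells lam nu) (he : e (r, c) = k + 1) : r ≤ n + k := by
  rcases lt_or_ge r n with h' | h'
  · omega
  · have hm : (n + (r - n), c) ∈ skewCells lam nu := by
      rw [show n + (r - n) = r by omega]; exact hmem
    have hc := raw_chain hln e hpos hcol (r - n) n c le_rfl hm
    rw [show n + (r - n) = r by omega] at hc
    have hp := hpos (n, c) (by
      have := raw_chain hln e hpos hcol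
      -- need (n, c) ∈ cells
      have hmem' := hmem
      simp only [skewCells, Set.mem_setOf_eq] at hmem' ⊢
      obtain ⟨ha, hb⟩ := hmem'
      have hnuz : nu.f n = 0 := f_eq_zero nu hln le_rfl
      have hlamz := lam.antitone h'
      exact ⟨by omega, by omega⟩)
    omega

lemma decomp (hl : l = m + n) (hll : lam.len ≤ l) (hln : nu.len ≤ n)
    (e' : ℕ × ℕ → ℕ) (e : ℕ × ℕ → ℕ)
    (hfr : ∀ r c, n ≤ r → r < l → c < d → e' (r, c) = r - n + 1)
    (he : ∀ p : ℕ × ℕ, e' (p.1, p.2 + d) = e p)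
    (k : ℕ) (P : ℕ × ℕ → Prop) :
    {q ∈ skewCells (rectAdd l d lam) (rectAdd n d nu) | e' q = k + 1 ∧ P q}.ncard =
      {c : ℕ | c < d ∧ n + k < l ∧ P (n + k, c)}.ncard +
      {p ∈ skewCells lam nu | e p = k + 1 ∧ P (p.1, p.2 + d)}.ncard := by
  classical
  set C' := skewCells (rectAdd l d lam) (rectAdd n d nu) with hC'
  set A := {q ∈ C' | q.2 < d ∧ e' q = k + 1 ∧ P q} with hA
  set B := {q ∈ C' | d ≤ q.2 ∧ e' q = k + 1 ∧ P q} with hB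
  have hU : {q ∈ C' | e' q = k + 1 ∧ P q} = A ∪ B := by
    ext q
    simp only [hA, hB, Set.mem_setOf_eq, Set.mem_union]
    constructor
    · rintro ⟨h1, h2, h3⟩
      rcases lt_or_ge q.2 d with h | h
      · exact Or.inl ⟨h1, h, h2, h3⟩
      · exact Or.inr ⟨h1, h, h2, h3⟩
    · rintro (⟨h1, _, h2, h3⟩ | ⟨h1, _, h2, h3⟩) <;> exact ⟨h1, h2, h3⟩
  have hAfin : A.Finite := (cells_finite _ _).subset (fun q hq => hq.1)
  have hBfin : B.Finite := (cells_finite _ _).subset (fun q hq => hq.1)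
  have hdisj : Disjoint A B := by
    rw [Set.disjoint_left]
    rintro q ⟨-, h1, -⟩ ⟨-, h2, -⟩
    omega
  have hAim : A = (fun c => ((n + k : ℕ), c)) '' {c : ℕ | c < d ∧ n + k < l ∧ P (n + k, c)} := by
    rw [hA]
    apply Set.Subset.antisymm
    · rintro ⟨q1, q2⟩ ⟨h1, h2, h3, h4⟩
      have hm := (mem_cells' hl hll hln q1 q2).mp h1
      have h2' : q2 < d := h2
      have h3' : e' (q1, q2) = k + 1 := h3
      have h4' : P (q1, q2) := h4
      rcases hm with ⟨-, hn1, hn2⟩ | ⟨hj, -, -⟩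
      · have hf := hfr q1 q2 hn1 hn2 h2'
        have hq1 : q1 = n + k := by omega
        exact ⟨q2, ⟨h2', by omega, by rw [← hq1]; exact h4'⟩, by rw [hq1]⟩
      · omega
    · rintro q ⟨c, ⟨hc1, hc2, hc3⟩, rfl⟩
      dsimp only
      refine ⟨rect_mem hl hll hln (by omega) hc2 hc1, hc1, ?_, hc3⟩
      show e' (n + k, c) = k + 1
      rw [hfr (n + k) c (by omega) hc2 hc1]
      omega
  have hBim : B = (fun p : ℕ × ℕ => (p.1, p.2 + d)) ''
      {p ∈ skewCells lam nu | e p = k + 1 ∧ P (p.1, p.2 + d)} := by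
    rw [hB]
    apply Set.Subset.antisymm
    · rintro ⟨q1, q2⟩ ⟨h1, h2, h3, h4⟩
      have hm := (mem_cells' hl hll hln q1 q2).mp h1
      have h2' : d ≤ q2 := h2
      have h3' : e' (q1, q2) = k + 1 := h3
      have h4' : P (q1, q2) := h4
      rcases hm with ⟨hj, -, -⟩ | ⟨-, -, hcell⟩
      · omega
      · refine ⟨(q1, q2 - d), ⟨hcell, ?_, ?_⟩, ?_⟩
        · show e (q1, q2 - d) = k + 1
          rw [← he (q1, q2 - d)]
          show e' (q1, q2 - d + d) = k + 1
          rw [show q2 - d + d = q2 by omega]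
          exact h3'
        · show P (q1, q2 - d + d)
          rw [show q2 - d + d = q2 by omega]
          exact h4'
        · show ((q1 : ℕ), q2 - d + d) = (q1, q2)
          rw [show q2 - d + d = q2 by omega]
    · rintro q ⟨⟨p1, p2⟩, ⟨hp1, hp2, hp3⟩, rfl⟩
      dsimp only
      have hp2' : e (p1, p2) = k + 1 := hp2
      have hp3' : P (p1, p2 + d) := hp3
      have hrow : p1 < l := cell_row_lt hll hp1
      refine ⟨(mem_cells' hl hll hln p1 (p2 + d)).mpr (Or.inr ⟨by omega, hrow, ?_⟩),
        by omega, ?_, hp3'⟩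
      · rw [show p2 + d - d = p2 by omega]
        exact hp1
      · show e' (p1, p2 + d) = k + 1
        rw [he (p1, p2)]
        exact hp2'
  rw [hU, Set.ncard_union_eq hdisj hAfin hBfin, hAim, hBim,
    Set.ncard_image_of_injective _ (fun a b h => by simpa using h),
    Set.ncard_image_of_injective _ (fun a b h => by
      obtain ⟨a1, a2⟩ := a; obtain ⟨b1, b2⟩ := b
      simp only [Prod.mk.injEq] at h ⊢
      omega)]

lemma cell_up (hln : nu.len ≤ n) {r r' c : ℕ} (h1 : n ≤ r) (h2 : r ≤ r')
    (hmem : (r', c) ∈ skewCells lam nu) : (r, c) ∈ skewCells lam nu := by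
  simp only [skewCells, Set.mem_setOf_eq] at hmem ⊢
  have hnuz : nu.f r = 0 := f_eq_zero nu hln h1
  have hmono := lam.antitone h2
  exact ⟨by omega, by omega⟩

lemma raw_row_ge (hln : nu.len ≤ n) (e : ℕ × ℕ → ℕ)
    (hpos : ∀ p ∈ skewCells lam nu, 0 < e p)
    (hcol : ∀ i i' j, (i, j) ∈ skewCells lam nu → (i', j) ∈ skewCells lam nu → i < i' →
      e (i, j) < e (i', j))
    {r c : ℕ} (hmem : (r, c) ∈ skewCells lam nu) (h1 : n ≤ r) : r - n + 1 ≤ e (r, c) := by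
  have hm : (n + (r - n), c) ∈ skewCells lam nu := by
    rw [show n + (r - n) = r by omega]; exact hmem
  have hc := raw_chain hln e hpos hcol (r - n) n c le_rfl hm
  rw [show n + (r - n) = r by omega] at hc
  have hp := hpos (n, c) (cell_up hln le_rfl h1 hmem)
  omega

def fentryF (n l d : ℕ) (e : ℕ × ℕ → ℕ) (q : ℕ × ℕ) : ℕ :=
  if q.2 < d then (if n ≤ q.1 ∧ q.1 < l then q.1 - n + 1 else 0) else e (q.1, q.2 - d)

lemma fentryF_lo {n l d : ℕ} (e : ℕ × ℕ → ℕ) {q : ℕ × ℕ} (hq : q.2 < d) :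
    fentryF n l d e q = if n ≤ q.1 ∧ q.1 < l then q.1 - n + 1 else 0 := if_pos hq

lemma fentryF_hi {n l d : ℕ} (e : ℕ × ℕ → ℕ) {q : ℕ × ℕ} (hq : d ≤ q.2) :
    fentryF n l d e q = e (q.1, q.2 - d) := if_neg (by omega)

lemma fwd_hfr (T : LRTableau lam nu mu) :
    ∀ r c, n ≤ r → r < l → c < d → fentryF n l d T.entry (r, c) = r - n + 1 := by
  intro r c h1 h2 h3
  rw [fentryF_lo T.entry (q := (r, c)) h3]
  exact if_pos ⟨h1, h2⟩

lemma fwd_he (T : LRTableau lam nu mu) :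
    ∀ p : ℕ × ℕ, fentryF n l d T.entry (p.1, p.2 + d) = T.entry p := by
  intro p
  rw [fentryF_hi T.entry (q := (p.1, p.2 + d)) (by omega)]
  show T.entry (p.1, p.2 + d - d) = T.entry p
  rw [show p.2 + d - d = p.2 by omega]

noncomputable def fwd (hl : l = m + n) (hll : lam.len ≤ l) (hlm : mu.len ≤ m)
    (hln : nu.len ≤ n) (T : LRTableau lam nu mu) :
    LRTableau (rectAdd l d lam) (rectAdd n d nu) (rectAdd m d mu) where
  entry := fentryF n l d T.entry
  zero_outside := by
    rintro ⟨i, j⟩ hq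
    rw [mem_cells' hl hll hln] at hq
    rcases lt_or_ge j d with h | h
    · rw [fentryF_lo T.entry (q := (i, j)) h]
      rw [if_neg]
      rintro ⟨h1, h2⟩
      exact hq (Or.inl ⟨h, h1, h2⟩)
    · rw [fentryF_hi T.entry (q := (i, j)) h]
      apply T.zero_outside
      intro hc
      exact hq (Or.inr ⟨h, cell_row_lt hll hc, hc⟩)
  pos := by
    rintro ⟨i, j⟩ hq
    rw [mem_cells' hl hll hln] at hq
    rcases hq with ⟨h1, h2, h3⟩ | ⟨h1, h2, h3⟩
    · rw [fentryF_lo T.entry (q := (i, j)) h1, if_pos ⟨h2, h3⟩]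
      omega
    · rw [fentryF_hi T.entry (q := (i, j)) h1]
      exact T.pos _ h3
  row_weak := by
    intro i j j' hj hj' hle
    rw [mem_cells' hl hll hln] at hj hj'
    rcases hj with ⟨h1, h2, h3⟩ | ⟨h1, h2, h3⟩
    · rcases hj' with ⟨g1, g2, g3⟩ | ⟨g1, g2, g3⟩
      · rw [fentryF_lo T.entry (q := (i, j)) h1, fentryF_lo T.entry (q := (i, j')) g1,
          if_pos ⟨h2, h3⟩]
      · rw [fentryF_lo T.entry (q := (i, j)) h1, fentryF_hi T.entry (q := (i, j')) g1,
          if_pos ⟨h2, h3⟩]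
        exact raw_row_ge hln T.entry T.pos T.col_strict g3 h2
    · rcases hj' with ⟨g1, g2, g3⟩ | ⟨g1, g2, g3⟩
      · omega
      · rw [fentryF_hi T.entry (q := (i, j)) h1, fentryF_hi T.entry (q := (i, j')) g1]
        exact T.row_weak i (j - d) (j' - d) h3 g3 (by omega)
  col_strict := by
    intro i i' j hj hj' hii
    rw [mem_cells' hl hll hln] at hj hj'
    rcases hj with ⟨h1, h2, h3⟩ | ⟨h1, h2, h3⟩
    · rcases hj' with ⟨g1, g2, g3⟩ | ⟨g1, g2, g3⟩
      · rw [fentryF_lo T.entry (q := (i, j)) h1, fentryF_lo T.entry (q := (i', j)) g1,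
          if_pos ⟨h2, h3⟩, if_pos ⟨g2, g3⟩]
        omega
      · omega
    · rcases hj' with ⟨g1, g2, g3⟩ | ⟨g1, g2, g3⟩
      · omega
      · rw [fentryF_hi T.entry (q := (i, j)) h1, fentryF_hi T.entry (q := (i', j)) g1]
        exact T.col_strict i i' (j - d) h3 g3 hii
  content := by
    intro k
    have heq : {p ∈ skewCells (rectAdd l d lam) (rectAdd n d nu) |
        fentryF n l d T.entry p = k + 1} =
        {q ∈ skewCells (rectAdd l d lam) (rectAdd n d nu) |
          fentryF n l d T.entry q = k + 1 ∧ (fun _ : ℕ × ℕ => True) q} := by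
      ext q; simp
    rw [heq, decomp hl hll hln (fentryF n l d T.entry) T.entry (fwd_hfr T) (fwd_he T) k
      (fun _ => True)]
    have h2 : {p ∈ skewCells lam nu | T.entry p = k + 1 ∧ (fun _ : ℕ × ℕ => True) (p.1, p.2 + d)}
        = {p ∈ skewCells lam nu | T.entry p = k + 1} := by
      ext p; simp
    rw [h2, T.content k, rectAdd_f]
    rcases lt_or_ge k m with hk | hk
    · rw [if_pos hk]
      have h3 : {c : ℕ | c < d ∧ n + k < l ∧ (fun _ : ℕ × ℕ => True) (n + k, c)} =
          {c : ℕ | c < d} := by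
        ext c; simp only [Set.mem_setOf_eq]
        constructor
        · rintro ⟨a, -, -⟩; exact a
        · intro a; exact ⟨a, by omega, trivial⟩
      rw [h3, ncard_lt_set]
    · rw [if_neg (by omega)]
      have h3 : {c : ℕ | c < d ∧ n + k < l ∧ (fun _ : ℕ × ℕ => True) (n + k, c)} =
          (∅ : Set ℕ) := by
        ext c; simp only [Set.mem_setOf_eq, Set.mem_empty_iff_false, iff_false]
        rintro ⟨-, a, -⟩; omega
      rw [h3, Set.ncard_empty, f_eq_zero mu hlm hk]
  lattice := by
    intro i j k
    have hd2 := decomp hl hll hln (fentryF n l d T.entry) T.entry (fwd_hfr T) (fwd_he T) (k + 1)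
      (fun q => q.1 < i ∨ (q.1 = i ∧ j ≤ q.2))
    have hd1 := decomp hl hll hln (fentryF n l d T.entry) T.entry (fwd_hfr T) (fwd_he T) k
      (fun q => q.1 < i ∨ (q.1 = i ∧ j ≤ q.2))
    beta_reduce at hd1 hd2
    rw [show k + 2 = k + 1 + 1 from rfl, hd2, hd1]
    apply Nat.add_le_add
    · apply Set.ncard_le_ncard
      · rintro c ⟨hc1, hc2, hc3⟩
        refine ⟨hc1, by omega, ?_⟩
        rcases hc3 with h | ⟨h, -⟩ <;> exact Or.inl (by omega)
      · exact (Set.finite_Iio d).subset fun c hc => hc.1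
    · have hset : ∀ k' : ℕ, {p ∈ skewCells lam nu | T.entry p = k' + 1 ∧
          ((p.1 : ℕ) < i ∨ (p.1 = i ∧ j ≤ p.2 + d))} =
          {p ∈ skewCells lam nu | T.entry p = k' + 1 ∧ (p.1 < i ∨ (p.1 = i ∧ j - d ≤ p.2))} := by
        intro k'
        ext p
        simp only [Set.mem_setOf_eq]
        constructor
        · rintro ⟨a, b, (h | ⟨h1, h2⟩)⟩
          exacts [⟨a, b, Or.inl h⟩, ⟨a, b, Or.inr ⟨h1, by omega⟩⟩]
        · rintro ⟨a, b, (h | ⟨h1, h2⟩)⟩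
          exacts [⟨a, b, Or.inl h⟩, ⟨a, b, Or.inr ⟨h1, by omega⟩⟩]
      rw [hset (k + 1), hset k]
      exact T.lattice i (j - d) k

open Classical in
noncomputable def bentryF (d : ℕ) (lam nu : LRPartition) (e' : ℕ × ℕ → ℕ) (p : ℕ × ℕ) : ℕ :=
  if p ∈ skewCells lam nu then e' (p.1, p.2 + d) else 0

lemma bentryF_mem (e' : ℕ × ℕ → ℕ) {p : ℕ × ℕ} (hp : p ∈ skewCells lam nu) :
    bentryF d lam nu e' p = e' (p.1, p.2 + d) := by
  rw [bentryF, if_pos hp]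

lemma bentryF_nmem (e' : ℕ × ℕ → ℕ) {p : ℕ × ℕ} (hp : p ∉ skewCells lam nu) :
    bentryF d lam nu e' p = 0 := by
  rw [bentryF, if_neg hp]

lemma cell_shift (hl : l = m + n) (hll : lam.len ≤ l) (hln : nu.len ≤ n) {p : ℕ × ℕ}
    (hp : p ∈ skewCells lam nu) :
    (p.1, p.2 + d) ∈ skewCells (rectAdd l d lam) (rectAdd n d nu) := by
  refine (mem_cells' hl hll hln p.1 (p.2 + d)).mpr (Or.inr ⟨by omega,
    cell_row_lt (l := l) hll (i := p.1) (j := p.2) hp, ?_⟩)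
  rw [show p.2 + d - d = p.2 by omega]
  exact hp

variable (hl : l = m + n) (hll : lam.len ≤ l) (hlm : mu.len ≤ m) (hln : nu.len ≤ n)
variable (T' : LRTableau (rectAdd l d lam) (rectAdd n d nu) (rectAdd m d mu))

include hl hll hlm hln T' in
lemma bwd_he : ∀ p : ℕ × ℕ, T'.entry (p.1, p.2 + d) = bentryF d lam nu T'.entry p := by
  intro p
  by_cases h : p ∈ skewCells lam nu
  · rw [bentryF_mem T'.entry h]
  · rw [bentryF_nmem T'.entry h]
    apply T'.zero_outside
    rw [mem_cells' hl hll hln]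
    rintro (⟨h1, -, -⟩ | ⟨-, -, h3⟩)
    · omega
    · rw [show p.2 + d - d = p.2 by omega] at h3
      exact h h3

include hl hll hlm hln T' in
lemma bwd_pos : ∀ p ∈ skewCells lam nu, 0 < bentryF d lam nu T'.entry p := by
  intro p hp
  rw [bentryF_mem T'.entry hp]
  exact T'.pos _ (cell_shift hl hll hln hp)

include hl hll hlm hln T' in
lemma bwd_col : ∀ i i' j, (i, j) ∈ skewCells lam nu → (i', j) ∈ skewCells lam nu → i < i' →
    bentryF d lam nu T'.entry (i, j) < bentryF d lam nu T'.entry (i', j) := by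
  intro i i' j h1 h2 hii
  rw [bentryF_mem T'.entry h1, bentryF_mem T'.entry h2]
  exact T'.col_strict i i' (j + d) (cell_shift hl hll hln h1) (cell_shift hl hll hln h2) hii

include hl hll hlm hln T' in
lemma bwd_content (k : ℕ) :
    {p ∈ skewCells lam nu | bentryF d lam nu T'.entry p = k + 1}.ncard = mu.f k := by
  have hfr : ∀ r c, n ≤ r → r < l → c < d → T'.entry (r, c) = r - n + 1 :=
    fun r c a b c' => frozen hl hll hlm hln T' a b c'
  have hd := decomp hl hll hln T'.entry (bentryF d lam nu T'.entry) hfr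
    (bwd_he hl hll hlm hln T') k (fun _ => True)
  have h1 : {q ∈ skewCells (rectAdd l d lam) (rectAdd n d nu) |
      T'.entry q = k + 1 ∧ (fun _ : ℕ × ℕ => True) q} =
      {q ∈ skewCells (rectAdd l d lam) (rectAdd n d nu) | T'.entry q = k + 1} := by
    ext q; simp
  have h4 : {p ∈ skewCells lam nu | bentryF d lam nu T'.entry p = k + 1 ∧
      (fun _ : ℕ × ℕ => True) (p.1, p.2 + d)} =
      {p ∈ skewCells lam nu | bentryF d lam nu T'.entry p = k + 1} := by
    ext p; simp
  rw [h1, h4, T'.content k, rectAdd_f] at hd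
  rcases lt_or_ge k m with hk | hk
  · rw [if_pos hk] at hd
    have h3 : {c : ℕ | c < d ∧ n + k < l ∧ (fun _ : ℕ × ℕ => True) (n + k, c)} =
        {c : ℕ | c < d} := by
      ext c; simp only [Set.mem_setOf_eq]
      constructor
      · rintro ⟨a, -, -⟩; exact a
      · intro a; exact ⟨a, by omega, trivial⟩
    rw [h3, ncard_lt_set] at hd
    omega
  · rw [if_neg (by omega)] at hd
    rw [f_eq_zero mu hlm hk]
    omega

include hl hll hlm hln T' in
lemma bwd_lattice (i j k : ℕ) :
    {p ∈ skewCells lam nu | bentryF d lam nu T'.entry p = k + 2 ∧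
      (p.1 < i ∨ (p.1 = i ∧ j ≤ p.2))}.ncard ≤
    {p ∈ skewCells lam nu | bentryF d lam nu T'.entry p = k + 1 ∧
      (p.1 < i ∨ (p.1 = i ∧ j ≤ p.2))}.ncard := by
  rcases lt_or_ge (n + k) i with hi | hi
  · have hrhs : {p ∈ skewCells lam nu | bentryF d lam nu T'.entry p = k + 1 ∧
        (p.1 < i ∨ (p.1 = i ∧ j ≤ p.2))} =
        {p ∈ skewCells lam nu | bentryF d lam nu T'.entry p = k + 1} := by
      ext p
      simp only [Set.mem_setOf_eq]
      constructor
      · rintro ⟨a, b, -⟩; exact ⟨a, b⟩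
      · rintro ⟨a, b⟩
        refine ⟨a, b, Or.inl ?_⟩
        have := raw_row_le hln (bentryF d lam nu T'.entry) (bwd_pos hl hll hlm hln T')
          (bwd_col hl hll hlm hln T') (r := p.1) (c := p.2) a b
        omega
    rw [hrhs, bwd_content hl hll hlm hln T' k]
    calc {p ∈ skewCells lam nu | bentryF d lam nu T'.entry p = k + 2 ∧
          (p.1 < i ∨ (p.1 = i ∧ j ≤ p.2))}.ncard
        ≤ {p ∈ skewCells lam nu | bentryF d lam nu T'.entry p = k + 1 + 1}.ncard := by
          apply Set.ncard_le_ncard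
          · rintro p ⟨a, b, -⟩; exact ⟨a, b⟩
          · exact (cells_finite _ _).subset fun p hp => hp.1
      _ = mu.f (k + 1) := bwd_content hl hll hlm hln T' (k + 1)
      _ ≤ mu.f k := mu.antitone (Nat.le_succ k)
  · have hfr : ∀ r c, n ≤ r → r < l → c < d → T'.entry (r, c) = r - n + 1 :=
      fun r c a b c' => frozen hl hll hlm hln T' a b c'
    have hT := T'.lattice i (j + d) k
    have hd2 := decomp hl hll hln T'.entry (bentryF d lam nu T'.entry) hfr
      (bwd_he hl hll hlm hln T') (k + 1) (fun q => q.1 < i ∨ (q.1 = i ∧ j + d ≤ q.2))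
    have hd1 := decomp hl hll hln T'.entry (bentryF d lam nu T'.entry) hfr
      (bwd_he hl hll hlm hln T') k (fun q => q.1 < i ∨ (q.1 = i ∧ j + d ≤ q.2))
    beta_reduce at hd1 hd2
    rw [show k + 2 = k + 1 + 1 from rfl] at hT
    rw [hd1, hd2] at hT
    have hc1 : {c : ℕ | c < d ∧ n + k < l ∧ ((n + k : ℕ) < i ∨ (n + k = i ∧ j + d ≤ c))} =
        (∅ : Set ℕ) := by
      ext c; simp only [Set.mem_setOf_eq, Set.mem_empty_iff_false, iff_false]
      rintro ⟨a, -, (h | ⟨h1, h2⟩)⟩ <;> omega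
    have hc2 : {c : ℕ | c < d ∧ n + (k + 1) < l ∧
        ((n + (k + 1) : ℕ) < i ∨ (n + (k + 1) = i ∧ j + d ≤ c))} = (∅ : Set ℕ) := by
      ext c; simp only [Set.mem_setOf_eq, Set.mem_empty_iff_false, iff_false]
      rintro ⟨a, -, (h | ⟨h1, h2⟩)⟩ <;> omega
    rw [hc1, hc2, Set.ncard_empty, Nat.zero_add, Nat.zero_add] at hT
    have ho : ∀ k' : ℕ, {p ∈ skewCells lam nu | bentryF d lam nu T'.entry p = k' + 1 ∧
        ((p.1 : ℕ) < i ∨ (p.1 = i ∧ j + d ≤ p.2 + d))} =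
        {p ∈ skewCells lam nu | bentryF d lam nu T'.entry p = k' + 1 ∧
          (p.1 < i ∨ (p.1 = i ∧ j ≤ p.2))} := by
      intro k'
      ext p
      simp only [Set.mem_setOf_eq]
      constructor
      · rintro ⟨a, b, (h | ⟨h1, h2⟩)⟩
        exacts [⟨a, b, Or.inl h⟩, ⟨a, b, Or.inr ⟨h1, by omega⟩⟩]
      · rintro ⟨a, b, (h | ⟨h1, h2⟩)⟩
        exacts [⟨a, b, Or.inl h⟩, ⟨a, b, Or.inr ⟨h1, by omega⟩⟩]
    rw [ho (k + 1), ho k] at hT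
    exact hT

include hl hll hlm hln T' in
noncomputable def bwd : LRTableau lam nu mu where
  entry := bentryF d lam nu T'.entry
  zero_outside := fun p hp => bentryF_nmem T'.entry hp
  pos := bwd_pos hl hll hlm hln T'
  row_weak := by
    intro i j j' h1 h2 h3
    rw [bentryF_mem T'.entry h1, bentryF_mem T'.entry h2]
    exact T'.row_weak i (j + d) (j' + d) (cell_shift hl hll hln h1) (cell_shift hl hll hln h2)
      (by omega)
  col_strict := bwd_col hl hll hlm hln T'
  content := bwd_content hl hll hlm hln T'
  lattice := bwd_lattice hl hll hlm hln T'

lemma LRTableau.ext' {lam nu mu : LRPartition} {T S : LRTableau lam nu mu}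
    (h : T.entry = S.entry) : T = S := by
  cases T; cases S; cases h; rfl

include hl hll hlm hln in
noncomputable def lrEquiv : LRTableau lam nu mu ≃
    LRTableau (rectAdd l d lam) (rectAdd n d nu) (rectAdd m d mu) where
  toFun := fwd hl hll hlm hln
  invFun := bwd hl hll hlm hln
  left_inv := by
    intro T
    apply LRTableau.ext'
    funext p
    obtain ⟨i, j⟩ := p
    show bentryF d lam nu (fentryF n l d T.entry) (i, j) = T.entry (i, j)
    by_cases h : (i, j) ∈ skewCells lam nu
    · rw [bentryF_mem _ h]
      exact fwd_he T (i, j)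
    · rw [bentryF_nmem _ h, T.zero_outside (i, j) h]
  right_inv := by
    intro T'
    apply LRTableau.ext'
    funext p
    obtain ⟨i, j⟩ := p
    show fentryF n l d (bentryF d lam nu T'.entry) (i, j) = T'.entry (i, j)
    rcases lt_or_ge j d with h | h
    · rw [fentryF_lo _ (q := (i, j)) h]
      by_cases h2 : n ≤ i ∧ i < l
      · rw [if_pos h2, frozen hl hll hlm hln T' h2.1 h2.2 h]
      · rw [if_neg h2]
        symm
        apply T'.zero_outside
        rw [mem_cells' hl hll hln]
        rintro (⟨-, a, b⟩ | ⟨a, -, -⟩)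
        · exact h2 ⟨a, b⟩
        · omega
    · rw [fentryF_hi _ (q := (i, j)) h]
      show bentryF d lam nu T'.entry (i, j - d) = T'.entry (i, j)
      by_cases h2 : (i, j - d) ∈ skewCells lam nu
      · rw [bentryF_mem _ h2]
        show T'.entry (i, j - d + d) = T'.entry (i, j)
        rw [show j - d + d = j by omega]
      · rw [bentryF_nmem _ h2]
        symm
        apply T'.zero_outside
        rw [mem_cells' hl hll hln]
        rintro (⟨a, -, -⟩ | ⟨-, -, a⟩)
        · omega
        · exact h2 a

end Main

end FrozenAux


/-- Adding frozen rectangles is a bijection on Littlewood–Richardson tableaux: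
`c^λ_{μ,ν} = c^{□_{l,d}+λ}_{□_{m,d}+μ, □_{n,d}+ν}` when `l = m + n`. -/
theorem frozen_rectangle_bijection (l m n d : ℕ) (lam mu nu : LRPartition) (hl : l = m + n)
    (hll : lam.len ≤ l) (hlm : mu.len ≤ m) (hln : nu.len ≤ n) :
    lrCoeff lam mu nu =
      lrCoeff (LRPartition.rectAdd l d lam) (LRPartition.rectAdd m d mu)
        (LRPartition.rectAdd n d nu) := by
  unfold lrCoeff
  exact Nat.card_congr (FrozenAux.lrEquiv hl hll hlm hln)
end
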